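/- Let n and m be positive integers and let Φ : M_n → M_n be a mixed-unitary quantum channel having Choi rank equal to r, mixed-unitary rank equal to r, and a unique mixed-unitary decomposition. Then for every unitary channel Ψ : M_m → M_m, the direct sum channel Φ ⊕ Ψ : M_{n+m} → M_{n+m} has Choi rank r + 1 and mixed-unitary rank 2r. -/

import Mathlib

/-!
Let `Φ = ∑ₖ pₖ Ad Uₖ` be the unique mixed-unitary decomposition and `S = {k | pₖ ≠ 0}`. All Kraus
families of a map span the same space (the range of its Choi matrix), so the Choi rank of `Φ` is
`dim span {Uₖ | k ∈ S}`; uniqueness bounds `|S|` by the mixed-unitary rank, hence equal ranks force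
`|S| = r` and the `Uₖ`, `k ∈ S`, to be linearly independent.

The Kraus operators `Uₖ ⊕ 0` and `0 ⊕ V` of `Φ ⊕ Ad V` span `span {Uₖ} ⊕ ℂ V`, so its Choi rank is
`r + 1`, and every unitary `Wⱼ` of positive weight `qⱼ` in a mixed-unitary decomposition of
`Φ ⊕ Ad V` has the form `Aⱼ ⊕ dⱼ V`. The diagonal blocks give a decomposition of `Φ`, so by
uniqueness each `Aⱼ` is a phase times some `Uₖ`, while the vanishing off-diagonal block gives
`∑ⱼ qⱼ d̄ⱼ Aⱼ = 0`. By linear independence every `Uₖ` with `k ∈ S` must then occur in at least two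
terms, so at least `2r` terms are needed; `∑ₖ ∑_± (pₖ / 2) Ad (Uₖ ⊕ ±V)` attains this.
-/

open scoped Kronecker ComplexOrder
open Matrix

/-- Square complex matrices indexed by `α`. -/
abbrev Mat (α : Type*) := Matrix α α ℂ

/-- The Choi matrix `J(Φ) = ∑_{j,k} Φ(E_{j,k}) ⊗ E_{j,k}` of a linear map between
matrix spaces. -/
noncomputable def choiMatrix {α β : Type*} [Fintype α] [DecidableEq α]
    (Φ : Mat α →ₗ[ℂ] Mat β) : Matrix (β × α) (β × α) ℂ :=
  ∑ j : α, ∑ k : α, (Φ (Matrix.single j k 1)) ⊗ₖ (Matrix.single j k 1)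

/-- The Choi rank of a linear map: the rank of its Choi matrix. -/
noncomputable def choiRank {α β : Type*} [Fintype α] [DecidableEq α] [Fintype β]
    (Φ : Mat α →ₗ[ℂ] Mat β) : ℕ :=
  (choiMatrix Φ).rank

/-- `A` is a Kraus representation of `Φ` (with the trace-preservation condition). -/
def IsKrausRep {α β : Type*} [Fintype α] [DecidableEq α] [Fintype β] {r : ℕ}
    (Φ : Mat α →ₗ[ℂ] Mat β) (A : Fin r → Matrix β α ℂ) : Prop :=
  (∀ X, Φ X = ∑ k, A k * X * (A k)ᴴ) ∧ (∑ k, (A k)ᴴ * A k = 1)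

/-- A quantum channel: a linear map admitting a Kraus representation
`Φ(X) = ∑ₖ Aₖ X Aₖ*` with `∑ₖ Aₖ* Aₖ = 1`. -/
def IsChannel {α β : Type*} [Fintype α] [DecidableEq α] [Fintype β]
    (Φ : Mat α →ₗ[ℂ] Mat β) : Prop :=
  ∃ (r : ℕ) (A : Fin r → Matrix β α ℂ), IsKrausRep Φ A

/-- The dimension of the operator system `span{Aⱼᴴ Aₖ}` generated by a Kraus family. -/
noncomputable def krausOpSystemDim {α β : Type*} [Fintype α] [Fintype β] {r : ℕ}
    (A : Fin r → Matrix β α ℂ) : ℕ :=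
  Module.finrank ℂ (Submodule.span ℂ {M : Mat α | ∃ j k, M = (A j)ᴴ * A k})

/-- A mixed-unitary decomposition of `Φ` with `N` terms: a probability vector `p`
and unitaries `U` with `Φ(X) = ∑ₖ pₖ Uₖ X Uₖ*`. -/
def IsMixedUnitaryDecomp {α : Type*} [Fintype α] [DecidableEq α] {N : ℕ}
    (Φ : Mat α →ₗ[ℂ] Mat α) (p : Fin N → ℝ) (U : Fin N → Mat α) : Prop :=
  (∀ k, 0 ≤ p k) ∧ (∑ k, p k = 1) ∧ (∀ k, U k ∈ Matrix.unitaryGroup α ℂ) ∧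
    (∀ X, Φ X = ∑ k, (p k : ℂ) • (U k * X * (U k)ᴴ))

/-- `Φ` is a mixed-unitary channel. -/
def IsMixedUnitary {α : Type*} [Fintype α] [DecidableEq α]
    (Φ : Mat α →ₗ[ℂ] Mat α) : Prop :=
  ∃ (N : ℕ) (p : Fin N → ℝ) (U : Fin N → Mat α), IsMixedUnitaryDecomp Φ p U

/-- The mixed-unitary rank: the minimum number of unitary conjugations in a
mixed-unitary decomposition. -/
noncomputable def mixedUnitaryRank {α : Type*} [Fintype α] [DecidableEq α]
    (Φ : Mat α →ₗ[ℂ] Mat α) : ℕ :=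
  sInf {N : ℕ | ∃ (p : Fin N → ℝ) (U : Fin N → Mat α), IsMixedUnitaryDecomp Φ p U}

/-- A mixed-unitary decomposition is the *unique* mixed-unitary decomposition of `Φ` if
every other mixed-unitary decomposition of `Φ` arises by partitioning its terms into
groups of phase-multiples of the `Uₖ` with matching total probabilities. -/
def IsUniqueMixedUnitaryDecomp {α : Type*} [Fintype α] [DecidableEq α] {N : ℕ}
    (Φ : Mat α →ₗ[ℂ] Mat α) (p : Fin N → ℝ) (U : Fin N → Mat α) : Prop :=
  IsMixedUnitaryDecomp Φ p U ∧
    ∀ (t : ℕ) (q : Fin t → ℝ) (V : Fin t → Mat α), IsMixedUnitaryDecomp Φ q V →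
      ∃ T : Fin t → Fin N,
        (∀ j, ∃ c : ℂ, ‖c‖ = 1 ∧ V j = c • U (T j)) ∧
        (∀ k, p k = ∑ j ∈ Finset.univ.filter (fun j => T j = k), q j)

/-- `Φ` possesses a unique mixed-unitary decomposition. -/
def HasUniqueMixedUnitaryDecomp {α : Type*} [Fintype α] [DecidableEq α]
    (Φ : Mat α →ₗ[ℂ] Mat α) : Prop :=
  ∃ (N : ℕ) (p : Fin N → ℝ) (U : Fin N → Mat α), IsUniqueMixedUnitaryDecomp Φ p U

/-- `Ψ : M_α → M_N` is complementary to `Φ : M_α → M_α`: there is a Kraus representation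
`Φ(X) = ∑ₖ Bₖ X Bₖ*` with `N` terms such that `Ψ(X)` has `(j,k)` entry `⟨Bₖ* Bⱼ, X⟩`. -/
def IsComplementary {α : Type*} [Fintype α] [DecidableEq α] {N : ℕ}
    (Φ : Mat α →ₗ[ℂ] Mat α) (Ψ : Mat α →ₗ[ℂ] Mat (Fin N)) : Prop :=
  ∃ B : Fin N → Mat α, IsKrausRep Φ B ∧
    ∀ X, Ψ X = Matrix.of fun j k => ((((B k)ᴴ * B j)ᴴ) * X).trace

/-- A unitary channel: conjugation by a fixed unitary matrix. -/
def IsUnitaryChannel {α : Type*} [Fintype α] [DecidableEq α]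
    (Ψ : Mat α →ₗ[ℂ] Mat α) : Prop :=
  ∃ U ∈ Matrix.unitaryGroup α ℂ, ∀ X, Ψ X = U * X * Uᴴ

/-- A correlation matrix: positive semidefinite with unit diagonal. -/
def IsCorrelation {α : Type*} [Fintype α] (C : Mat α) : Prop :=
  C.PosSemidef ∧ ∀ i, C i i = 1

/-- A toroidal decomposition of `C` with `N` terms: `C = ∑ₖ pₖ uₖ uₖ*` where each `uₖ`
has all entries of modulus one. -/
def IsToroidalDecomp {α : Type*} [Fintype α] {N : ℕ}
    (C : Mat α) (p : Fin N → ℝ) (u : Fin N → α → ℂ) : Prop :=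
  (∀ k, 0 ≤ p k) ∧ (∑ k, p k = 1) ∧ (∀ k i, ‖u k i‖ = 1) ∧
    C = ∑ k, (p k : ℂ) • Matrix.vecMulVec (u k) (star (u k))

/-- A correlation matrix is toroidal if it is a convex combination of rank-one
correlation matrices `u u*` with `u` having unimodular entries. -/
def IsToroidal {α : Type*} [Fintype α] (C : Mat α) : Prop :=
  ∃ (N : ℕ) (p : Fin N → ℝ) (u : Fin N → α → ℂ), IsToroidalDecomp C p u

/-- The toroidal rank of a correlation matrix. -/
noncomputable def toroidalRank {α : Type*} [Fintype α] (C : Mat α) : ℕ :=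
  sInf {N : ℕ | ∃ (p : Fin N → ℝ) (u : Fin N → α → ℂ), IsToroidalDecomp C p u}

theorem two_mul_card_le_of_sum_smul_eq_zero {R M ι κ : Type*} [Ring R] [AddCommGroup M]
    [Module R M] [Fintype ι] [DecidableEq κ] {S : Finset κ} {u : κ → M}
    (hu : LinearIndepOn R u S) {T : ι → κ} {a : ι → R} (hsum : ∑ j, a j • u (T j) = 0)
    (hT : ∀ j, a j ≠ 0 → T j ∈ S) (hS : ∀ k ∈ S, ∃ j, T j = k ∧ a j ≠ 0) :
    2 * S.card ≤ Fintype.card ι := by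
  classical
  set J : Finset ι := {j | a j ≠ 0}
  have hJ : ∀ j ∈ J, T j ∈ S := fun j hj => hT j (Finset.mem_filter.1 hj).2
  have hfiber_sum : ∀ k ∈ S, ∑ j ∈ J with T j = k, a j = 0 := by
    refine linearIndepOn_iff'.1 hu S _ subset_rfl ?_
    calc ∑ k ∈ S, (∑ j ∈ J with T j = k, a j) • u k
        = ∑ k ∈ S, ∑ j ∈ J with T j = k, a j • u (T j) := by
          refine Finset.sum_congr rfl fun k _ => ?_
          rw [Finset.sum_smul]
          exact Finset.sum_congr rfl fun j hj => by rw [(Finset.mem_filter.1 hj).2]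
      _ = ∑ j ∈ J, a j • u (T j) := Finset.sum_fiberwise_of_maps_to hJ _
      _ = 0 := by rw [Finset.sum_filter_of_ne fun j _ h => left_ne_zero_of_smul h, hsum]
  have hfiber_card : ∀ k ∈ S, 2 ≤ (J.filter fun j => T j = k).card := by
    intro k hk
    by_contra! hlt
    obtain ⟨j, rfl, hj⟩ := hS k hk
    have hjJ : j ∈ J.filter fun i => T i = T j := by simp [J, hj]
    have hsingle := Finset.sum_eq_single_of_mem (f := a) j hjJ fun i hi hij =>
      absurd (Finset.card_le_one.1 (Nat.le_of_lt_succ hlt) i hi j hjJ) hij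
    exact hj (hsingle ▸ hfiber_sum _ hk)
  calc 2 * S.card = ∑ k ∈ S, 2 := by rw [Finset.sum_const, smul_eq_mul, mul_comm]
    _ ≤ ∑ k ∈ S, (J.filter fun j => T j = k).card := Finset.sum_le_sum hfiber_card
    _ = J.card := (Finset.card_eq_sum_card_fiberwise hJ).symm
    _ ≤ Fintype.card ι := Finset.card_le_univ J

theorem Submodule.finrank_prod {M M' : Type*} [AddCommGroup M] [Module ℂ M]
    [FiniteDimensional ℂ M] [AddCommGroup M'] [Module ℂ M'] [FiniteDimensional ℂ M']
    (P : Submodule ℂ M) (Q : Submodule ℂ M') :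
    Module.finrank ℂ (P.prod Q) = Module.finrank ℂ P + Module.finrank ℂ Q := by
  rw [← P.range_subtype, ← Q.range_subtype, ← LinearMap.range_prodMap,
    LinearMap.finrank_range_of_inj (P.injective_subtype.prodMap Q.injective_subtype),
    Module.finrank_prod, P.range_subtype, Q.range_subtype]

namespace Matrix

section Choi

/-- Row-major vectorization. Mathlib's `Matrix.vec` stacks columns instead, whereas the Choi
matrix is indexed by `β × α`. -/
def vecₗ (α β : Type*) : Matrix β α ℂ →ₗ[ℂ] (β × α → ℂ) where
  toFun A x := A x.1 x.2
  map_add' _ _ := rfl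
  map_smul' _ _ := rfl

theorem vecₗ_injective {α β : Type*} : Function.Injective (vecₗ α β) :=
  fun _ _ h => Matrix.ext fun i j => congrFun h (i, j)

variable {α β ι η : Type*} [Fintype ι] [Fintype η]

theorem range_mulVecLin_sum_vecMulVec_star (v : ι → η → ℂ) :
    LinearMap.range (∑ k, vecMulVec (v k) (star (v k))).mulVecLin =
      Submodule.span ℂ (Set.range v) := by
  set M : Matrix η ι ℂ := (of v)ᵀ
  have hM : ∑ k, vecMulVec (v k) (star (v k)) = M * Mᴴ := by
    ext i j
    simp [M, vecMulVec_apply, mul_apply, sum_apply]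
  have hle : LinearMap.range (M * Mᴴ).mulVecLin ≤ LinearMap.range M.mulVecLin := by
    rw [mulVecLin_mul]
    exact LinearMap.range_comp_le_range _ _
  rw [hM, Submodule.eq_of_le_of_finrank_le hle (rank_self_mul_conjTranspose M).ge,
    range_mulVecLin]
  rfl

variable [Fintype α] [DecidableEq α]

theorem choiMatrix_eq_sum_vecMulVec {Φ : Mat α →ₗ[ℂ] Mat β} {A : ι → Matrix β α ℂ}
    (hΦ : ∀ X, Φ X = ∑ k, A k * X * (A k)ᴴ) :
    choiMatrix Φ = ∑ k, vecMulVec (vecₗ α β (A k)) (star (vecₗ α β (A k))) := by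
  ext ⟨a, b⟩ ⟨c, d⟩
  simp [choiMatrix, sum_apply, hΦ, single, mul_apply, vecMulVec_apply, vecₗ, ite_and]
  rfl

variable [Fintype β]

theorem range_mulVecLin_choiMatrix {Φ : Mat α →ₗ[ℂ] Mat β} {A : ι → Matrix β α ℂ}
    (hΦ : ∀ X, Φ X = ∑ k, A k * X * (A k)ᴴ) :
    LinearMap.range (choiMatrix Φ).mulVecLin =
      (Submodule.span ℂ (Set.range A)).map (vecₗ α β) := by
  rw [choiMatrix_eq_sum_vecMulVec hΦ, range_mulVecLin_sum_vecMulVec_star, Submodule.map_span,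
    ← Set.range_comp]
  rfl

theorem choiRank_eq_finrank_span {Φ : Mat α →ₗ[ℂ] Mat β} {A : ι → Matrix β α ℂ}
    (hΦ : ∀ X, Φ X = ∑ k, A k * X * (A k)ᴴ) :
    choiRank Φ = Module.finrank ℂ (Submodule.span ℂ (Set.range A)) := by
  rw [choiRank, rank, range_mulVecLin_choiMatrix hΦ]
  exact (Submodule.equivMapOfInjective _ vecₗ_injective _).finrank_eq.symm

theorem span_range_eq_of_kraus {Φ : Mat α →ₗ[ℂ] Mat β} {A : ι → Matrix β α ℂ}
    {B : η → Matrix β α ℂ} (hA : ∀ X, Φ X = ∑ k, A k * X * (A k)ᴴ)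
    (hB : ∀ X, Φ X = ∑ k, B k * X * (B k)ᴴ) :
    Submodule.span ℂ (Set.range A) = Submodule.span ℂ (Set.range B) :=
  Submodule.map_injective_of_injective vecₗ_injective <| by
    rw [← range_mulVecLin_choiMatrix hA, ← range_mulVecLin_choiMatrix hB]

end Choi

section Blocks

variable {α β : Type*}

def blockDiagₗ (α β : Type*) : Mat α × Mat β →ₗ[ℂ] Mat (α ⊕ β) where
  toFun x := fromBlocks x.1 0 0 x.2
  map_add' x y := by simp [fromBlocks_add]
  map_smul' c x := by simp [fromBlocks_smul]

theorem blockDiagₗ_injective : Function.Injective (blockDiagₗ α β) := fun x y h => by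
  obtain ⟨h₁, -, -, h₂⟩ := fromBlocks_inj.1 h
  exact Prod.ext h₁ h₂

theorem sum_fromBlocks {ι : Type*} (s : Finset ι) (A : ι → Mat α) (B : ι → Matrix α β ℂ)
    (C : ι → Matrix β α ℂ) (D : ι → Mat β) :
    ∑ k ∈ s, fromBlocks (A k) (B k) (C k) (D k) =
      fromBlocks (∑ k ∈ s, A k) (∑ k ∈ s, B k) (∑ k ∈ s, C k) (∑ k ∈ s, D k) := by
  ext (i | i) (j | j) <;> simp [sum_apply]

theorem eq_zero_of_forall_mul_eq_zero [Fintype α] [DecidableEq α] [DecidableEq β] [Nonempty β]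
    {M : Mat α} (h : ∀ Y : Matrix α β ℂ, M * Y = 0) : M = 0 := by
  ext a i
  obtain ⟨b⟩ := ‹Nonempty β›
  simpa using congrFun (congrFun (h (single i b 1)) a) b

variable [Fintype α] [Fintype β]

theorem fromBlocks_smul_conj (A : Mat α) (c : ℂ) (B : Mat β) (Z : Mat (α ⊕ β)) :
    fromBlocks A 0 0 (c • B) * Z * (fromBlocks A 0 0 (c • B))ᴴ =
      fromBlocks (A * Z.toBlocks₁₁ * Aᴴ) (star c • (A * Z.toBlocks₁₂ * Bᴴ))
        (c • (B * Z.toBlocks₂₁ * Aᴴ)) ((star c * c) • (B * Z.toBlocks₂₂ * Bᴴ)) := by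
  conv_lhs => rw [← fromBlocks_toBlocks Z]
  simp [fromBlocks_conjTranspose, fromBlocks_multiply, Matrix.mul_smul, smul_mul, smul_smul]

variable [DecidableEq α] [DecidableEq β]

theorem fromBlocks_mem_unitaryGroup_iff {A : Mat α} {B : Mat β} :
    fromBlocks A 0 0 B ∈ unitaryGroup (α ⊕ β) ℂ ↔
      A ∈ unitaryGroup α ℂ ∧ B ∈ unitaryGroup β ℂ := by
  simp [mem_unitaryGroup_iff', star_eq_conjTranspose, fromBlocks_conjTranspose,
    fromBlocks_multiply, ← fromBlocks_one, fromBlocks_inj]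

theorem smul_mem_unitaryGroup {V : Mat β} (hV : V ∈ unitaryGroup β ℂ) {c : ℂ}
    (hc : star c * c = 1) : c • V ∈ unitaryGroup β ℂ := by
  rw [mem_unitaryGroup_iff'] at hV ⊢
  rw [star_smul, smul_mul, Matrix.mul_smul, smul_smul, hV, hc, one_smul]

theorem ne_zero_of_mem_unitaryGroup [Nonempty β] {V : Mat β} (hV : V ∈ unitaryGroup β ℂ) :
    V ≠ 0 := by
  rintro rfl
  simp [mem_unitaryGroup_iff'] at hV

end Blocks

end Matrix

section MixedUnitary

open Finset

variable {α : Type*}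

theorem span_range_sqrt_smul {ι : Type*} {p : ι → ℝ} (hp : ∀ k, 0 ≤ p k) (U : ι → Mat α) :
    Submodule.span ℂ (Set.range fun k => (√(p k) : ℂ) • U k) =
      Submodule.span ℂ (U '' {k | p k ≠ 0}) := by
  apply le_antisymm <;> rw [Submodule.span_le]
  · rintro _ ⟨k, rfl⟩
    by_cases hk : p k = 0
    · simp [hk]
    · exact Submodule.smul_mem _ _ (Submodule.subset_span ⟨k, hk, rfl⟩)
  · rintro _ ⟨k, hk, rfl⟩
    have hsqrt : (√(p k) : ℂ) ≠ 0 := by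
      exact_mod_cast (Real.sqrt_pos.2 ((hp k).lt_of_ne' hk)).ne'
    exact (Submodule.smul_mem_iff _ hsqrt).1 (Submodule.subset_span ⟨k, rfl⟩)

variable [Fintype α]

theorem smul_conj_eq_sqrt_smul_conj {p : ℝ} (hp : 0 ≤ p) (U X : Mat α) :
    (p : ℂ) • (U * X * Uᴴ) = ((√p : ℂ) • U) * X * ((√p : ℂ) • U)ᴴ := by
  simp only [conjTranspose_smul, smul_mul, Matrix.mul_smul, smul_smul, Complex.star_def,
    Complex.conj_ofReal, ← Complex.ofReal_mul, Real.mul_self_sqrt hp]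

variable {Φ : Mat α →ₗ[ℂ] Mat α}

theorem kraus_of_sum_smul_conj {ι : Type*} [Fintype ι] {p : ι → ℝ} {U : ι → Mat α}
    (hp : ∀ k, 0 ≤ p k) (hΦ : ∀ X, Φ X = ∑ k, (p k : ℂ) • (U k * X * (U k)ᴴ)) (X : Mat α) :
    Φ X = ∑ k, ((√(p k) : ℂ) • U k) * X * ((√(p k) : ℂ) • U k)ᴴ := by
  simp only [hΦ, smul_conj_eq_sqrt_smul_conj (hp _)]

variable [DecidableEq α]

theorem mem_span_of_sum_smul_conj {ι κ : Type*} [Fintype ι] [Fintype κ] {A : κ → Mat α}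
    (hA : ∀ X, Φ X = ∑ k, A k * X * (A k)ᴴ) {q : ι → ℝ} {W : ι → Mat α} (hq : ∀ j, 0 ≤ q j)
    (hΦ : ∀ X, Φ X = ∑ j, (q j : ℂ) • (W j * X * (W j)ᴴ)) {j : ι} (hj : q j ≠ 0) :
    W j ∈ Submodule.span ℂ (Set.range A) := by
  rw [span_range_eq_of_kraus hA (kraus_of_sum_smul_conj hq hΦ), span_range_sqrt_smul hq]
  exact Submodule.subset_span ⟨j, hj, rfl⟩

theorem isMixedUnitaryDecomp_comp_equiv {ι : Type*} [Fintype ι] {N : ℕ} (e : Fin N ≃ ι)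
    {p : ι → ℝ} {U : ι → Mat α} (hp : ∀ k, 0 ≤ p k) (hp1 : ∑ k, p k = 1)
    (hU : ∀ k, U k ∈ unitaryGroup α ℂ) (hΦ : ∀ X, Φ X = ∑ k, (p k : ℂ) • (U k * X * (U k)ᴴ)) :
    IsMixedUnitaryDecomp Φ (p ∘ e) (U ∘ e) :=
  ⟨fun _ => hp _, (e.sum_comp p).trans hp1, fun _ => hU _,
    fun X => (hΦ X).trans (e.sum_comp fun k => (p k : ℂ) • (U k * X * (U k)ᴴ)).symm⟩

variable {N : ℕ} {p : Fin N → ℝ} {U : Fin N → Mat α}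

theorem IsMixedUnitaryDecomp.choiRank_eq (h : IsMixedUnitaryDecomp Φ p U) :
    choiRank Φ = Module.finrank ℂ (Submodule.span ℂ (U '' {k | p k ≠ 0})) := by
  rw [choiRank_eq_finrank_span (kraus_of_sum_smul_conj h.1 h.2.2.2), span_range_sqrt_smul h.1]

theorem mixedUnitaryRank_le (h : IsMixedUnitaryDecomp Φ p U) : mixedUnitaryRank Φ ≤ N :=
  Nat.sInf_le ⟨p, U, h⟩

theorem IsMixedUnitary.exists_isMixedUnitaryDecomp (h : IsMixedUnitary Φ) :
    ∃ (q : Fin (mixedUnitaryRank Φ) → ℝ) (V : Fin (mixedUnitaryRank Φ) → Mat α),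
      IsMixedUnitaryDecomp Φ q V :=
  Nat.sInf_mem h

theorem IsUniqueMixedUnitaryDecomp.card_support_le (h : IsUniqueMixedUnitaryDecomp Φ p U)
    {t : ℕ} {q : Fin t → ℝ} {V : Fin t → Mat α} (hV : IsMixedUnitaryDecomp Φ q V) :
    #{k | p k ≠ 0} ≤ t := by
  obtain ⟨T, -, hT⟩ := h.2 t q V hV
  have hsub : ({k | p k ≠ 0} : Finset (Fin N)) ⊆ univ.image T := by
    intro k hk
    rw [mem_filter, hT k] at hk
    obtain ⟨j, hj, -⟩ := exists_ne_zero_of_sum_ne_zero hk.2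
    exact mem_image.2 ⟨j, mem_univ j, (mem_filter.1 hj).2⟩
  simpa using (card_le_card hsub).trans card_image_le

theorem IsUniqueMixedUnitaryDecomp.card_support_eq_and_linearIndepOn
    (h : IsUniqueMixedUnitaryDecomp Φ p U) (hrank : mixedUnitaryRank Φ ≤ choiRank Φ) :
    #{k | p k ≠ 0} = choiRank Φ ∧ LinearIndepOn ℂ U {k | p k ≠ 0} := by
  have hcard : Fintype.card {k | p k ≠ 0} = #{k | p k ≠ 0} := by
    simp [Fintype.card_subtype]
  have hrange : Set.range (fun k : {k | p k ≠ 0} => U k) = U '' {k | p k ≠ 0} :=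
    (Set.image_eq_range _ _).symm
  have hle : #{k | p k ≠ 0} ≤ choiRank Φ := by
    obtain ⟨q, V, hV⟩ := IsMixedUnitary.exists_isMixedUnitaryDecomp ⟨N, p, U, h.1⟩
    exact (h.card_support_le hV).trans hrank
  have hge : choiRank Φ ≤ #{k | p k ≠ 0} := by
    rw [h.1.choiRank_eq, ← hcard, ← hrange]
    exact finrank_range_le_card _
  refine ⟨hle.antisymm hge, linearIndependent_iff_card_eq_finrank_span.2 ?_⟩
  rw [hcard, Set.finrank, hrange, ← h.1.choiRank_eq]
  exact hle.antisymm hge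

end MixedUnitary

section DirectSum

open Matrix Finset

variable {α β ι κ : Type*}

def directSumKraus (A : ι → Mat α) (B : κ → Mat β) : ι ⊕ κ → Mat (α ⊕ β) :=
  blockDiagₗ α β ∘ Sum.elim (LinearMap.inl ℂ _ _ ∘ A) (LinearMap.inr ℂ _ _ ∘ B)

theorem span_range_directSumKraus (A : ι → Mat α) (B : κ → Mat β) :
    Submodule.span ℂ (Set.range (directSumKraus A B)) =
      ((Submodule.span ℂ (Set.range A)).prod (Submodule.span ℂ (Set.range B))).map
        (blockDiagₗ α β) := by
  rw [directSumKraus, Set.range_comp, Submodule.span_image, Set.Sum.elim_range,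
    Set.range_comp, Set.range_comp, LinearMap.span_inl_union_inr]

variable [Fintype α] [DecidableEq α] [Fintype β] [DecidableEq β] [Fintype ι] [Fintype κ]
  {Φ : Mat α →ₗ[ℂ] Mat α} {Ψ : Mat β →ₗ[ℂ] Mat β} {Ξ : Mat (α ⊕ β) →ₗ[ℂ] Mat (α ⊕ β)}
  {V : Mat β}

theorem kraus_directSum (hΞ : ∀ Z, Ξ Z = fromBlocks (Φ Z.toBlocks₁₁) 0 0 (Ψ Z.toBlocks₂₂))
    {A : ι → Mat α} {B : κ → Mat β} (hA : ∀ X, Φ X = ∑ k, A k * X * (A k)ᴴ)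
    (hB : ∀ Y, Ψ Y = ∑ k, B k * Y * (B k)ᴴ) (Z : Mat (α ⊕ β)) :
    Ξ Z = ∑ i, directSumKraus A B i * Z * (directSumKraus A B i)ᴴ := by
  have hconj (A : Mat α) (B : Mat β) : fromBlocks A 0 0 B * Z * (fromBlocks A 0 0 B)ᴴ =
      fromBlocks (A * Z.toBlocks₁₁ * Aᴴ) (A * Z.toBlocks₁₂ * Bᴴ)
        (B * Z.toBlocks₂₁ * Aᴴ) (B * Z.toBlocks₂₂ * Bᴴ) := by
    simpa using fromBlocks_smul_conj A 1 B Z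
  simp [directSumKraus, blockDiagₗ, hconj, sum_fromBlocks, hΞ, hA, hB]

theorem choiRank_directSum (hΞ : ∀ Z, Ξ Z = fromBlocks (Φ Z.toBlocks₁₁) 0 0 (Ψ Z.toBlocks₂₂))
    {A : ι → Mat α} {B : κ → Mat β} (hA : ∀ X, Φ X = ∑ k, A k * X * (A k)ᴴ)
    (hB : ∀ Y, Ψ Y = ∑ k, B k * Y * (B k)ᴴ) :
    choiRank Ξ = choiRank Φ + choiRank Ψ := by
  rw [choiRank_eq_finrank_span (kraus_directSum hΞ hA hB), span_range_directSumKraus,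
    choiRank_eq_finrank_span hA, choiRank_eq_finrank_span hB,
    ← (Submodule.equivMapOfInjective _ blockDiagₗ_injective _).finrank_eq,
    Submodule.finrank_prod]

theorem choiRank_unitaryConj [Nonempty β] {V : Mat β} (hV : V ∈ unitaryGroup β ℂ)
    (hΨ : ∀ Y, Ψ Y = V * Y * Vᴴ) : choiRank Ψ = 1 := by
  rw [choiRank_eq_finrank_span (A := fun _ : Unit => V) (by simpa using hΨ), Set.range_const,
    finrank_span_singleton (ne_zero_of_mem_unitaryGroup hV)]

theorem IsMixedUnitaryDecomp.exists_directSum {t : ℕ} {q : Fin t → ℝ} {U : Fin t → Mat α}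
    (h : IsMixedUnitaryDecomp Φ q U) (hV : V ∈ unitaryGroup β ℂ) (hΨ : ∀ Y, Ψ Y = V * Y * Vᴴ)
    (hΞ : ∀ Z, Ξ Z = fromBlocks (Φ Z.toBlocks₁₁) 0 0 (Ψ Z.toBlocks₂₂)) :
    ∃ (P : Fin (2 * t) → ℝ) (W : Fin (2 * t) → Mat (α ⊕ β)), IsMixedUnitaryDecomp Ξ P W := by
  -- the two signs make the off-diagonal blocks cancel
  let s : Fin 2 → ℂ := ![1, -1]
  have hs (i : Fin 2) : star (s i) * s i = 1 := by fin_cases i <;> simp [s]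
  refine ⟨_, _, isMixedUnitaryDecomp_comp_equiv finProdFinEquiv.symm
    (p := fun x => q x.2 / 2) (U := fun x => fromBlocks (U x.2) 0 0 (s x.1 • V))
    (fun x => div_nonneg (h.1 x.2) zero_le_two) ?_
    (fun x => fromBlocks_mem_unitaryGroup_iff.2 ⟨h.2.2.1 x.2, smul_mem_unitaryGroup hV (hs _)⟩)
    fun Z => ?_⟩
  · simp [Fintype.sum_prod_type, ← Finset.sum_div, h.2.1]
  · have hpair (k : Fin t) : ∑ i : Fin 2, ((q k / 2 : ℝ) : ℂ) •
        (fromBlocks (U k) 0 0 (s i • V) * Z * (fromBlocks (U k) 0 0 (s i • V))ᴴ) =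
        fromBlocks ((q k : ℂ) • (U k * Z.toBlocks₁₁ * (U k)ᴴ)) 0 0
          ((q k : ℂ) • (V * Z.toBlocks₂₂ * Vᴴ)) := by
      simp only [Fin.sum_univ_two, fromBlocks_smul_conj, hs, fromBlocks_smul, fromBlocks_add]
      simp only [s, Fin.isValue, cons_val_zero, cons_val_one, star_one, star_neg, one_smul,
        neg_smul, smul_neg, add_neg_cancel]
      congr 1 <;> module
    rw [Fintype.sum_prod_type, Finset.sum_comm, Finset.sum_congr rfl fun k _ => hpair k,
      sum_fromBlocks, hΞ, h.2.2.2, hΨ, ← Finset.sum_smul, ← Complex.ofReal_sum, h.2.1]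
    simp

variable [Nonempty β]

theorem exists_fromBlocks_of_isMixedUnitaryDecomp (hΨ : ∀ Y, Ψ Y = V * Y * Vᴴ)
    (hΞ : ∀ Z, Ξ Z = fromBlocks (Φ Z.toBlocks₁₁) 0 0 (Ψ Z.toBlocks₂₂))
    {ι : Type*} [Fintype ι] {A : ι → Mat α} (hA : ∀ X, Φ X = ∑ k, A k * X * (A k)ᴴ)
    {t : ℕ} {q : Fin t → ℝ} {W : Fin t → Mat (α ⊕ β)} (hW : IsMixedUnitaryDecomp Ξ q W)
    {j : Fin t} (hj : q j ≠ 0) :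
    ∃ U ∈ unitaryGroup α ℂ, ∃ d : ℂ, d ≠ 0 ∧ W j = fromBlocks U 0 0 (d • V) := by
  have hΞA := kraus_directSum hΞ hA (B := fun _ : Unit => V) (by simpa using hΨ)
  have hmem := mem_span_of_sum_smul_conj hΞA hW.1 hW.2.2.2 hj
  rw [span_range_directSumKraus, Set.range_const] at hmem
  obtain ⟨⟨U, Y⟩, ⟨-, hY⟩, hUY⟩ := hmem
  obtain ⟨d, rfl⟩ := Submodule.mem_span_singleton.1 hY
  have hunit := hW.2.2.1 j
  rw [← hUY, blockDiagₗ, LinearMap.coe_mk, AddHom.coe_mk,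
    fromBlocks_mem_unitaryGroup_iff] at hunit
  refine ⟨U, hunit.1, d, ?_, hUY.symm⟩
  rintro rfl
  exact ne_zero_of_mem_unitaryGroup hunit.2 (zero_smul ℂ V)

theorem sum_smul_conj_of_eq_fromBlocks (hV : V ∈ unitaryGroup β ℂ)
    (hΞ : ∀ Z, Ξ Z = fromBlocks (Φ Z.toBlocks₁₁) 0 0 (Ψ Z.toBlocks₂₂))
    {t : ℕ} {q : Fin t → ℝ} {W : Fin t → Mat (α ⊕ β)}
    (hW : ∀ Z, Ξ Z = ∑ j, (q j : ℂ) • (W j * Z * (W j)ᴴ))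
    {U : Fin t → Mat α} {d : Fin t → ℂ}
    (hUd : ∀ j, q j ≠ 0 → W j = fromBlocks (U j) 0 0 (d j • V)) :
    (∀ X, Φ X = ∑ j, (q j : ℂ) • (U j * X * (U j)ᴴ)) ∧
      ∑ j, ((q j : ℂ) * star (d j)) • U j = 0 := by
  have hblocks (Z : Mat (α ⊕ β)) : fromBlocks (Φ Z.toBlocks₁₁) 0 0 (Ψ Z.toBlocks₂₂) =
      fromBlocks (∑ j, (q j : ℂ) • (U j * Z.toBlocks₁₁ * (U j)ᴴ))
        (∑ j, ((q j : ℂ) * star (d j)) • (U j * Z.toBlocks₁₂ * Vᴴ))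
        (∑ j, ((q j : ℂ) * d j) • (V * Z.toBlocks₂₁ * (U j)ᴴ))
        (∑ j, ((q j : ℂ) * (star (d j) * d j)) • (V * Z.toBlocks₂₂ * Vᴴ)) := by
    rw [← hΞ, hW, ← sum_fromBlocks]
    refine Finset.sum_congr rfl fun j _ => ?_
    by_cases hj : q j = 0
    · simp [hj]
    · rw [hUd j hj, fromBlocks_smul_conj, fromBlocks_smul]
      simp only [smul_smul]
  refine ⟨fun X => by simpa using (fromBlocks_inj.1 (hblocks (fromBlocks X 0 0 0))).1, ?_⟩
  refine eq_zero_of_forall_mul_eq_zero (β := β) fun Y => ?_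
  have h12 := (fromBlocks_inj.1 (hblocks (fromBlocks 0 (Y * V) 0 0))).2.1
  rw [mem_unitaryGroup_iff, star_eq_conjTranspose] at hV
  simpa [Matrix.sum_mul, Matrix.smul_mul, Matrix.mul_assoc, hV] using h12.symm

theorem IsUniqueMixedUnitaryDecomp.two_mul_card_support_le {N : ℕ} {p : Fin N → ℝ}
    {U : Fin N → Mat α} (h : IsUniqueMixedUnitaryDecomp Φ p U)
    (hU : LinearIndepOn ℂ U {k | p k ≠ 0}) (hV : V ∈ unitaryGroup β ℂ)
    (hΨ : ∀ Y, Ψ Y = V * Y * Vᴴ)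
    (hΞ : ∀ Z, Ξ Z = fromBlocks (Φ Z.toBlocks₁₁) 0 0 (Ψ Z.toBlocks₂₂))
    {t : ℕ} {q : Fin t → ℝ} {W : Fin t → Mat (α ⊕ β)} (hW : IsMixedUnitaryDecomp Ξ q W) :
    2 * #{k | p k ≠ 0} ≤ t := by
  have hblock (j : Fin t) : ∃ A ∈ unitaryGroup α ℂ, ∃ d : ℂ, d ≠ 0 ∧
      (q j ≠ 0 → W j = fromBlocks A 0 0 (d • V)) := by
    by_cases hj : q j = 0
    -- terms of weight zero are unconstrained; give them dummy block data
    · exact ⟨1, one_mem _, 1, one_ne_zero, fun h => absurd hj h⟩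
    · obtain ⟨A, hA, d, hd, hWj⟩ := exists_fromBlocks_of_isMixedUnitaryDecomp hΨ hΞ
        (kraus_of_sum_smul_conj h.1.1 h.1.2.2.2) hW hj
      exact ⟨A, hA, d, hd, fun _ => hWj⟩
  choose A hA d hd hWA using hblock
  obtain ⟨hΦA, hsum⟩ := sum_smul_conj_of_eq_fromBlocks hV hΞ hW.2.2.2 hWA
  obtain ⟨T, hT, hpT⟩ := h.2 t q A ⟨hW.1, hW.2.1, hA, hΦA⟩
  choose c hc hAc using hT
  have hp_pos {j : Fin t} (hj : q j ≠ 0) : p (T j) ≠ 0 := by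
    rw [hpT]
    exact (((hW.1 j).lt_of_ne' hj).trans_le
      (single_le_sum (f := q) (fun i _ => hW.1 i)
        (mem_filter.2 ⟨mem_univ j, rfl⟩ : j ∈ ({i | T i = T j} : Finset _)))).ne'
  have ha {j : Fin t} (hj : q j ≠ 0) : (q j : ℂ) * star (d j) * c j ≠ 0 := by
    have hc0 : c j ≠ 0 := norm_ne_zero_iff.1 (by rw [hc j]; exact one_ne_zero)
    simp [hj, hd j, hc0]
  refine (two_mul_card_le_of_sum_smul_eq_zero (u := U) (by simpa using hU) (T := T)
    (a := fun j => (q j : ℂ) * star (d j) * c j) ?_ ?_ ?_).trans (Fintype.card_fin t).le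
  · simpa [mul_smul, ← hAc] using hsum
  · intro j hj
    exact mem_filter.2 ⟨mem_univ _, hp_pos (by rintro h; simp [h] at hj)⟩
  · intro k hk
    rw [mem_filter, hpT] at hk
    obtain ⟨j, hj, hqj⟩ := exists_ne_zero_of_sum_ne_zero hk.2
    exact ⟨j, (mem_filter.1 hj).2, ha hqj⟩

end DirectSum

theorem stmt6_general (n m : ℕ) (hm : 0 < m) (r : ℕ)
    (Φ : Mat (Fin n) →ₗ[ℂ] Mat (Fin n))
    (hchoi : choiRank Φ = r) (hrank : mixedUnitaryRank Φ = r)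
    (huniq : HasUniqueMixedUnitaryDecomp Φ)
    (Ψ : Mat (Fin m) →ₗ[ℂ] Mat (Fin m)) (hΨ : IsUnitaryChannel Ψ)
    (Ξ : Mat (Fin n ⊕ Fin m) →ₗ[ℂ] Mat (Fin n ⊕ Fin m))
    (hΞ : ∀ Z, Ξ Z = Matrix.fromBlocks (Φ Z.toBlocks₁₁) 0 0 (Ψ Z.toBlocks₂₂)) :
    IsMixedUnitary Ξ ∧ choiRank Ξ = r + 1 ∧ mixedUnitaryRank Ξ = 2 * r := by
  have := Fin.pos_iff_nonempty.1 hm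
  obtain ⟨V, hV, hΨV⟩ := hΨ
  obtain ⟨N, p, U, huniq⟩ := huniq
  obtain ⟨hcard, hU⟩ := huniq.card_support_eq_and_linearIndepOn (hrank.trans hchoi.symm).le
  obtain ⟨q, W, hqW⟩ : ∃ (q : Fin r → ℝ) (W : Fin r → Mat (Fin n)), IsMixedUnitaryDecomp Φ q W :=
    hrank ▸ IsMixedUnitary.exists_isMixedUnitaryDecomp ⟨N, p, U, huniq.1⟩
  obtain ⟨P, W', hPW'⟩ := hqW.exists_directSum hV hΨV hΞ
  refine ⟨⟨_, P, W', hPW'⟩, ?_, (mixedUnitaryRank_le hPW').antisymm ?_⟩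
  · rw [choiRank_directSum hΞ (kraus_of_sum_smul_conj huniq.1.1 huniq.1.2.2.2)
      (B := fun _ : Unit => V) (by simpa using hΨV), hchoi, choiRank_unitaryConj hV hΨV]
  · obtain ⟨_, _, hΞdecomp⟩ := IsMixedUnitary.exists_isMixedUnitaryDecomp ⟨_, P, W', hPW'⟩
    rw [← hchoi, ← hcard]
    exact huniq.two_mul_card_support_le hU hV hΨV hΞ hΞdecomp

/-- Theorem 5 of the paper. If `Φ : M_n → M_n` is mixed unitary with
Choi rank `r`, mixed-unitary rank `r`, and a unique mixed-unitary decomposition, then for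
every unitary channel `Ψ : M_m → M_m` the direct sum channel `Φ ⊕ Ψ` has Choi rank
`r + 1` and mixed-unitary rank `2r`. -/
theorem stmt6 (n m : ℕ) (hn : 0 < n) (hm : 0 < m) (r : ℕ)
    (Φ : Mat (Fin n) →ₗ[ℂ] Mat (Fin n))
    (hmu : IsMixedUnitary Φ)
    (hchoi : choiRank Φ = r) (hrank : mixedUnitaryRank Φ = r)
    (huniq : HasUniqueMixedUnitaryDecomp Φ)
    (Ψ : Mat (Fin m) →ₗ[ℂ] Mat (Fin m)) (hΨ : IsUnitaryChannel Ψ)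
    (Ξ : Mat (Fin n ⊕ Fin m) →ₗ[ℂ] Mat (Fin n ⊕ Fin m))
    (hΞ : ∀ Z, Ξ Z = Matrix.fromBlocks (Φ Z.toBlocks₁₁) 0 0 (Ψ Z.toBlocks₂₂)) :
    IsMixedUnitary Ξ ∧ choiRank Ξ = r + 1 ∧ mixedUnitaryRank Ξ = 2 * r :=
  stmt6_general n m hm r Φ hchoi hrank huniq Ψ hΨ Ξ hΞ
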